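/- Let g : [0,1]^N → ℝ^M be a low-rank tensor-product model g(x) = Σ_{r=1}^R v_r ∏_{n=1}^N g_{n,r}(x_n), where each g_{n,r} : [0,1] → ℝ is continuously differentiable, and let B = ∏_{n=1}^N [a_n, b_n] ⊆ [0,1]^N be an axis-aligned box. Then the local Dirichlet energy over B admits the closed form ∫_B ‖∇g(x)‖_F² dx = Σ_{r=1}^R Σ_{k=1}^R ⟨v_r, v_k⟩_{ℝ^M} Σ_{q=1}^N ⟨g'_{q,r}, g'_{q,k}⟩_{[a_q,b_q]} ∏_{n≠q} ⟨g_{n,r}, g_{n,k}⟩_{[a_n,b_n]}, where ⟨f, h⟩_{[a,b]} := ∫_a^b f(x) h(x) dx. -/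

import Mathlib

/-!
Write `∂_q g(x) = Σ_r c_{q,r}(x) v_r` with `c_{q,r}(x) = g'_{q,r}(x_q) ∏_{n ≠ q} g_{n,r}(x_n)`.
Expanding the squared norm gives `‖∂_q g(x)‖² = Σ_{r,k} ⟨v_r, v_k⟩ c_{q,r}(x) c_{q,k}(x)`, and each
product `c_{q,r} c_{q,k}` is a product of functions of the separate coordinates, so by Fubini its
integral over the box factorizes into the one-dimensional inner products.
-/

open MeasureTheory Finset

section BoxIntegral

variable {ι 𝕜 : Type*} [Fintype ι] [RCLike 𝕜] {E : ι → Type*} [∀ i, MeasureSpace (E i)]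
  [∀ i, SigmaFinite (volume : Measure (E i))]

theorem setIntegral_univ_pi_prod (f : (i : ι) → E i → 𝕜) (s : (i : ι) → Set (E i)) :
    ∫ x in Set.univ.pi s, ∏ i, f i (x i) = ∏ i, ∫ t in s i, f i t := by
  rw [volume_pi, Measure.restrict_pi_pi, integral_fintype_prod_eq_prod]

theorem setIntegral_univ_pi_mul_prod_erase [DecidableEq ι] (f : (i : ι) → E i → 𝕜)
    (s : (i : ι) → Set (E i)) (q : ι) (φ : E q → 𝕜) :
    ∫ x in Set.univ.pi s, φ (x q) * ∏ i ∈ univ.erase q, f i (x i) =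
      (∫ t in s q, φ t) * ∏ i ∈ univ.erase q, ∫ t in s i, f i t := by
  have key : ∀ G : (i : ι) → (E i → 𝕜) → 𝕜,
      ∏ i, G i (Function.update f q φ i) = G q φ * ∏ i ∈ univ.erase q, G i (f i) := fun G => by
    rw [← mul_prod_erase univ _ (mem_univ q), Function.update_self]
    exact congrArg _ <| prod_congr rfl fun i hi => by
      rw [Function.update_of_ne (ne_of_mem_erase hi)]
  rw [← key fun i h => ∫ t in s i, h t, ← setIntegral_univ_pi_prod]
  congr with x
  exact (key fun i h => h (x i)).symm

end BoxIntegral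

section Derivative

variable {ι : Type*} [Fintype ι] [DecidableEq ι]

theorem hasFDerivAt_prod_apply {f : ι → ℝ → ℝ} {x : ι → ℝ}
    (hf : ∀ i, DifferentiableAt ℝ (f i) (x i)) :
    HasFDerivAt (fun y : ι → ℝ => ∏ i, f i (y i))
      (∑ i, (∏ j ∈ univ.erase i, f j (x j)) •
        deriv (f i) (x i) • ContinuousLinearMap.proj (R := ℝ) (φ := fun _ : ι => ℝ) i) x :=
  HasFDerivAt.finsetProd fun i _ => (hf i).hasDerivAt.comp_hasFDerivAt x (hasFDerivAt_apply i x)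

theorem fderiv_prod_apply_single {f : ι → ℝ → ℝ} {x : ι → ℝ}
    (hf : ∀ i, DifferentiableAt ℝ (f i) (x i)) (q : ι) :
    fderiv ℝ (fun y : ι → ℝ => ∏ i, f i (y i)) x (Pi.single q 1) =
      deriv (f q) (x q) * ∏ i ∈ univ.erase q, f i (x i) := by
  simp [(hasFDerivAt_prod_apply hf).fderiv, Pi.single_apply, mul_comm]

theorem fderiv_sum_smul_const_apply {ρ E F : Type*} [Fintype ρ] [NormedAddCommGroup E]
    [NormedSpace ℝ E] [NormedAddCommGroup F] [NormedSpace ℝ F] {φ : ρ → E → ℝ} {x : E}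
    (hφ : ∀ r, DifferentiableAt ℝ (φ r) x) (v : ρ → F) (e : E) :
    fderiv ℝ (fun y => ∑ r, φ r y • v r) x e = ∑ r, fderiv ℝ (φ r) x e • v r := by
  rw [fderiv_fun_sum fun r _ => (hφ r).smul_const (v r)]
  simp [fderiv_smul_const (hφ _)]

end Derivative

theorem norm_sq_sum_smul {ρ F : Type*} [Fintype ρ] [NormedAddCommGroup F] [InnerProductSpace ℝ F]
    (c : ρ → ℝ) (v : ρ → F) :
    ‖∑ r, c r • v r‖ ^ 2 = ∑ r, ∑ k, inner ℝ (v r) (v k) * (c r * c k) := by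
  simp_rw [← real_inner_self_eq_norm_sq, sum_inner, inner_sum, real_inner_smul_left,
    real_inner_smul_right]
  exact sum_congr rfl fun r _ => sum_congr rfl fun k _ => by ring

theorem sum_norm_sq_fderiv_tensorProduct_apply_single {ι ρ F : Type*} [Fintype ι] [DecidableEq ι]
    [Fintype ρ] [NormedAddCommGroup F] [InnerProductSpace ℝ F] {g : ι → ρ → ℝ → ℝ} {x : ι → ℝ}
    (hg : ∀ n r, DifferentiableAt ℝ (g n r) (x n)) (v : ρ → F) :
    ∑ q, ‖fderiv ℝ (fun y : ι → ℝ => ∑ r, (∏ n, g n r (y n)) • v r) x (Pi.single q 1)‖ ^ 2 =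
      ∑ r, ∑ k, inner ℝ (v r) (v k) * ∑ q, deriv (g q r) (x q) * deriv (g q k) (x q) *
        ∏ n ∈ univ.erase q, g n r (x n) * g n k (x n) := by
  simp_rw [fderiv_sum_smul_const_apply fun r => (hasFDerivAt_prod_apply (hg · r)).differentiableAt,
    fderiv_prod_apply_single (hg · _), norm_sq_sum_smul, mul_sum, prod_mul_distrib]
  rw [sum_comm]
  refine sum_congr rfl fun r _ => ?_
  rw [sum_comm]
  exact sum_congr rfl fun k _ => sum_congr rfl fun q _ => by ring

/-- Local Dirichlet energy of a low-rank tensor-product model over an axis-aligned box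
`B = ∏_n [a_n, b_n] ⊆ [0,1]^N` admits the closed form
`Σ_r Σ_k ⟨v_r, v_k⟩ Σ_q ⟨g'_{q,r}, g'_{q,k}⟩_{[a_q,b_q]} ∏_{n≠q} ⟨g_{n,r}, g_{n,k}⟩_{[a_n,b_n]}`. -/
theorem tpbs_local_dirichlet_energy_box (N M R : ℕ)
    (v : Fin R → EuclideanSpace ℝ (Fin M))
    (g : Fin N → Fin R → ℝ → ℝ)
    (hg : ∀ n r, ContDiff ℝ 1 (g n r))
    (G : (Fin N → ℝ) → EuclideanSpace ℝ (Fin M))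
    (hG : ∀ x, G x = ∑ r, (∏ n, g n r (x n)) • v r)
    (a b : Fin N → ℝ)
    (hab : ∀ n, 0 ≤ a n ∧ a n ≤ b n ∧ b n ≤ 1) :
    (∫ x in Set.univ.pi fun n : Fin N => Set.Icc (a n) (b n),
        ∑ i : Fin M, ∑ q : Fin N, (fderiv ℝ G x (Pi.single q 1) i) ^ 2) =
      ∑ r, ∑ k, (inner ℝ (v r) (v k) : ℝ) *
        ∑ q, (∫ t in (a q)..(b q), deriv (g q r) t * deriv (g q k) t) *
          ∏ n ∈ Finset.univ.erase q, ∫ t in (a n)..(b n), g n r t * g n k t := by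
  obtain rfl : G = fun y => ∑ r, (∏ n, g n r (y n)) • v r := funext hG
  have hcont : ∀ n r, Continuous (g n r) := fun n r => (hg n r).continuous
  have hcont' : ∀ n r, Continuous (deriv (g n r)) := fun n r => (hg n r).continuous_deriv le_rfl
  have hint : ∀ r k q, IntegrableOn
      (fun x : Fin N → ℝ => deriv (g q r) (x q) * deriv (g q k) (x q) *
        ∏ n ∈ univ.erase q, g n r (x n) * g n k (x n))
      (Set.univ.pi fun n => Set.Icc (a n) (b n)) :=
    fun r k q => ContinuousOn.integrableOn_compact (isCompact_univ_pi fun n => isCompact_Icc)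
      (by fun_prop)
  have hIcc : ∀ n (f : ℝ → ℝ), ∫ t in Set.Icc (a n) (b n), f t = ∫ t in a n..b n, f t :=
    fun n f => by rw [integral_Icc_eq_integral_Ioc, intervalIntegral.integral_of_le (hab n).2.1]
  simp_rw [sum_comm (γ := Fin M), ← EuclideanSpace.real_norm_sq_eq,
    sum_norm_sq_fderiv_tensorProduct_apply_single fun n r => (hg n r).differentiable one_ne_zero _]
  rw [integral_finsetSum _ fun r _ => integrable_finsetSum _ fun k _ =>
    (integrable_finsetSum _ fun q _ => hint r k q).const_mul _]
  refine sum_congr rfl fun r _ => ?_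
  rw [integral_finsetSum _ fun k _ => (integrable_finsetSum _ fun q _ => hint r k q).const_mul _]
  refine sum_congr rfl fun k _ => ?_
  rw [integral_const_mul, integral_finsetSum _ fun q _ => hint r k q]
  refine congrArg _ (sum_congr rfl fun q _ => ?_)
  rw [setIntegral_univ_pi_mul_prod_erase (fun n t => g n r t * g n k t) _ q
    fun t => deriv (g q r) t * deriv (g q k) t]
  simp only [hIcc]
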